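/- Let T ∈ T^(m)(n) and let X = (v_1, …, v_k) be an S-connected cadet sequence of T with maximal S-cadet sequences X_1, …, X_{k'} listed in increasing order of the index of their last node, and set X_0 = {0} = X_{k'+1}. Define a (possibly failing) sequence of indices as follows: i_0 = 0; for j ≥ 0 with i_j ≠ k', let X_{i_{j+1}} be the smallest-indexed maximal S-cadet sequence that is reached by X_{i_j} but is not reached by X_{i_ℓ} for any ℓ < j, the procedure failing at this step if no such maximal S-cadet sequence exists; if i_j = k', set t = j and terminate. Then: if the procedure fails at any step, the contribution of X is r_S(X) = 0; otherwise the contribution of X is r_S(X) = (−1)^{k−t}. -/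

import Mathlib

open scoped Classical

/-- The derived sets `S⁻ᵢⱼ` of nonnegative integers:
for `i < j`, `S⁻ᵢⱼ = {s ≥ 0 : -s ∈ Sᵢⱼ}`, and `S⁻ⱼᵢ = {0} ∪ {s > 0 : s ∈ Sᵢⱼ}`. -/
def Sminus {n : ℕ} (S : Fin n → Fin n → Finset ℤ) (i j : Fin n) : Set ℕ :=
  if i < j then {s : ℕ | -(s : ℤ) ∈ S i j}
  else {0} ∪ {s : ℕ | 0 < s ∧ (s : ℤ) ∈ S j i}

/-- `m`: the maximal absolute value of an element of some `S i j` (`i < j`). -/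
def mOf {n : ℕ} (S : Fin n → Fin n → Finset ℤ) : ℕ :=
  Finset.univ.sup fun p : Fin n × Fin n =>
    if p.1 < p.2 then (S p.1 p.2).sup (fun s => s.natAbs) else 0

/-- A rooted labeled plane tree with `n` nodes (labeled by `Fin n`, index `i` representing
the label `i+1`, so the node `1` is `(0 : Fin n)`), each node having exactly `m+1`
linearly ordered children; children that are not nodes are unlabeled leaves and carry no
further data. `parent v` is the parent node of the node `v` (with the convention
`parent root = root`), and `pos v` is the position of `v` among the `m+1` children of its
parent, so `(pos v : ℕ)` is the number `lsib v` of left siblings of `v`. -/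
structure PlaneTree (n m : ℕ) where
  root : Fin n
  parent : Fin n → Fin n
  pos : Fin n → Fin (m + 1)
  parent_root : parent root = root
  reaches_root : ∀ v : Fin n, ∃ k : ℕ, parent^[k] v = root
  pos_inj : ∀ v w : Fin n, v ≠ root → w ≠ root → parent v = parent w → pos v = pos w → v = w

namespace PlaneTree

variable {n m : ℕ}

/-- `v` is a child of `u` (among the nodes). -/
def IsChild (T : PlaneTree n m) (v u : Fin n) : Prop :=
  v ≠ T.root ∧ T.parent v = u

/-- `v` is the cadet of `u`: the rightmost child of `u` that is a node. -/
def IsCadet (T : PlaneTree n m) (u v : Fin n) : Prop :=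
  T.IsChild v u ∧ ∀ w : Fin n, T.IsChild w u → T.pos w ≤ T.pos v

/-- The number of left siblings of `v`. -/
def lsib (T : PlaneTree n m) (v : Fin n) : ℕ := (T.pos v : ℕ)

end PlaneTree

/-- `(v a, v (a+1), …, v b)` is a cadet sequence of `T` (1-indexed, `1 ≤ a ≤ b`). -/
def IsCadetWindow {n m : ℕ} (T : PlaneTree n m) (v : ℕ → Fin n) (a b : ℕ) : Prop :=
  1 ≤ a ∧ a ≤ b ∧ ∀ p : ℕ, a < p → p ≤ b → T.IsCadet (v (p - 1)) (v p)

/-- `v` is injective on the indices `a, …, b`. -/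
def WindowInj {n : ℕ} (v : ℕ → Fin n) (a b : ℕ) : Prop :=
  ∀ p q : ℕ, a ≤ p → p ≤ b → a ≤ q → q ≤ b → v p = v q → p = q

/-- `(v a, …, v b)` is an `S`-cadet sequence of `T`. -/
def IsSCadetWindow {n m : ℕ} (S : Fin n → Fin n → Finset ℤ) (T : PlaneTree n m)
    (v : ℕ → Fin n) (a b : ℕ) : Prop :=
  IsCadetWindow T v a b ∧
    ∀ i j : ℕ, a ≤ i → i < j → j ≤ b →
      (∑ p ∈ Finset.Icc (i + 1) j, T.lsib (v p)) ∉ Sminus S (v i) (v j)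

/-- `(v 1, …, v k)` is a maximal cadet sequence of `T`: all children of `v k` are
leaves, and no node has `v 1` as its cadet. -/
def IsMaxCadetSeq {n m : ℕ} (T : PlaneTree n m) (k : ℕ) (v : ℕ → Fin n) : Prop :=
  IsCadetWindow T v 1 k ∧ (∀ w : Fin n, ¬ T.IsChild w (v k)) ∧ ∀ u : Fin n, ¬ T.IsCadet u (v 1)

/-- `(v a, …, v b)` is a maximal `S`-cadet sequence inside the ambient cadet sequence
`(v 1, …, v k)`. -/
def IsMaxSCadetWindow {n m : ℕ} (S : Fin n → Fin n → Finset ℤ) (T : PlaneTree n m)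
    (k : ℕ) (v : ℕ → Fin n) (a b : ℕ) : Prop :=
  b ≤ k ∧ IsSCadetWindow S T v a b ∧
    (a = 1 ∨ ¬ IsSCadetWindow S T v (a - 1) b) ∧
    (b = k ∨ ¬ IsSCadetWindow S T v a (b + 1))

/-- `Y` is (the set of nodes of) a maximal `S`-cadet sequence of `T`. -/
def IsMaxSCadetSet {n m : ℕ} (S : Fin n → Fin n → Finset ℤ) (T : PlaneTree n m)
    (Y : Finset (Fin n)) : Prop :=
  ∃ (k : ℕ) (v : ℕ → Fin n) (a b : ℕ), IsMaxCadetSeq T k v ∧ WindowInj v 1 k ∧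
    IsMaxSCadetWindow S T k v a b ∧ Y = (Finset.Icc a b).image v

/-- `Y` is (the set of nodes of) a nonempty cadet sequence of `T`. -/
def IsCadetSeqSet {n m : ℕ} (T : PlaneTree n m) (Y : Finset (Fin n)) : Prop :=
  ∃ (k : ℕ) (v : ℕ → Fin n), IsCadetWindow T v 1 k ∧ WindowInj v 1 k ∧
    Y = (Finset.Icc 1 k).image v

/-- `X` is (the set of nodes of) an `S`-connected cadet sequence of `T`: it is a cadet
sequence, every maximal `S`-cadet sequence is disjoint from it or contained in it, and no
cadet sequence with this property is properly contained in it. -/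
def SConnected {n m : ℕ} (S : Fin n → Fin n → Finset ℤ) (T : PlaneTree n m)
    (X : Finset (Fin n)) : Prop :=
  IsCadetSeqSet T X ∧
    (∀ Y, IsMaxSCadetSet S T Y → X ∩ Y = ∅ ∨ Y ⊆ X) ∧
    ∀ X', IsCadetSeqSet T X' → (∀ Y, IsMaxSCadetSet S T Y → X' ∩ Y = ∅ ∨ Y ⊆ X') →
      X' ⊆ X → X' = X

/-- `Y` is (the set of nodes of) an `S`-cadet sequence of `T` (a possible box). -/
def IsSBox {n m : ℕ} (S : Fin n → Fin n → Finset ℤ) (T : PlaneTree n m)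
    (Y : Finset (Fin n)) : Prop :=
  ∃ (k : ℕ) (v : ℕ → Fin n), IsSCadetWindow S T v 1 k ∧ WindowInj v 1 k ∧
    Y = (Finset.Icc 1 k).image v

/-- `B` is an `S`-boxing of the set of nodes `X`: a partition of `X` into
`S`-cadet sequences. -/
def IsSBoxingOf {n m : ℕ} (S : Fin n → Fin n → Finset ℤ) (T : PlaneTree n m)
    (X : Finset (Fin n)) (B : Finset (Finset (Fin n))) : Prop :=
  (∀ Y ∈ B, IsSBox S T Y ∧ Y ⊆ X) ∧ ∀ u ∈ X, ∃! Y, Y ∈ B ∧ u ∈ Y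

/-- The contribution `r_S(X)` of a cadet sequence with (injective) node set `X`
(whose length is `X.card`): `∑_{B ∈ U_S(X)} (-1)^(|X| - |B|)`. -/
noncomputable def contrib {n m : ℕ} (S : Fin n → Fin n → Finset ℤ) (T : PlaneTree n m)
    (X : Finset (Fin n)) : ℤ :=
  ∑ B : Finset (Finset (Fin n)),
    if IsSBoxingOf S T X B then (-1 : ℤ) ^ (X.card - B.card) else 0

/-- The contribution `r_S(T) = ∑_{B ∈ U_S(T)} (-1)^(n - |B|)` of the tree `T`. -/
noncomputable def treeContrib {n m : ℕ} (S : Fin n → Fin n → Finset ℤ)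
    (T : PlaneTree n m) : ℤ :=
  contrib S T Finset.univ

/-- The tuple `S` is transitive. -/
def TransitiveS {n : ℕ} (S : Fin n → Fin n → Finset ℤ) : Prop :=
  ∀ i j k : Fin n, i ≠ j → j ≠ k → i ≠ k →
    ∀ s t : ℕ, s ∉ Sminus S i j → t ∉ Sminus S j k → s + t ∉ Sminus S i k

/-- The arrangement `A_S` is almost transitive (`(i : ℕ) = 0` encodes "`i` is the node `1`"). -/
def AlmostTransitive {n : ℕ} (S : Fin n → Fin n → Finset ℤ) : Prop :=
  ∀ i j k : Fin n, i ≠ j → j ≠ k → i ≠ k → (i : ℕ) ≠ 0 → (k : ℕ) ≠ 0 →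
    ∀ s t : ℕ, s ∉ Sminus S i j → t ∉ Sminus S j k → s + t ∉ Sminus S i k

/-- `A_S` is an Ish-type arrangement: `0 ∈ Sᵢⱼ` for all `i < j`, and `Sᵢⱼ = {0}`
whenever `1 < i < j`. -/
def IshType {n : ℕ} (S : Fin n → Fin n → Finset ℤ) : Prop :=
  (∀ i j : Fin n, i < j → (0 : ℤ) ∈ S i j) ∧
    ∀ i j : Fin n, 0 < (i : ℕ) → i < j → S i j = {0}

/-- `A_S` is a nested Ish arrangement. -/
def NestedIsh {n : ℕ} (S : Fin n → Fin n → Finset ℤ) : Prop :=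
  IshType S ∧ ∀ i j k : Fin n, (i : ℕ) = 0 → 0 < (j : ℕ) → j < k → S i j ⊆ S i k

/-- The lower inefficiency `E_l(T)`: the number of lower inefficient nodes of `T`,
i.e. nodes `w` that are left siblings of the node `1` with `lsib w ∉ S⁻_{w,1}`. -/
noncomputable def Elow {n m : ℕ} [NeZero n] (S : Fin n → Fin n → Finset ℤ)
    (T : PlaneTree n m) : ℕ :=
  (Finset.univ.filter fun w : Fin n =>
    w ≠ T.root ∧ (0 : Fin n) ≠ T.root ∧ T.parent w = T.parent 0 ∧ T.pos w < T.pos 0 ∧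
      T.lsib w ∉ Sminus S w 0).card

/-- The upper inefficiency `E_u(T)`: the number of upper inefficient nodes of `T`,
i.e. nodes `w` with parent the node `1` that are not the cadet of `1`, with
`lsib w ∉ S⁻_{1,w}`. -/
noncomputable def Eup {n m : ℕ} [NeZero n] (S : Fin n → Fin n → Finset ℤ)
    (T : PlaneTree n m) : ℕ :=
  (Finset.univ.filter fun w : Fin n =>
    T.IsChild w 0 ∧ ¬ T.IsCadet 0 w ∧ T.lsib w ∉ Sminus S 0 w).card

/-- The class `S(e_l, ℓ_l, e_u, ℓ_u)` of trees in `T^(m)(n)` with nonzero contribution,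
lower/upper inefficiencies `e_l, e_u` and lower/upper 1-lengths `ℓ_l, ℓ_u` (the latter
expressed via the maximal `S`-cadet sequence `{v_{j-ℓ_l}, …, v_j, …, v_{j+ℓ_u}}`
around the node `1 = v j` inside its maximal cadet sequence `(v 1, …, v t)`). -/
def ClassS {n : ℕ} [NeZero n] (S : Fin n → Fin n → Finset ℤ) (el ll eu lu : ℕ) :
    Set (PlaneTree n (mOf S)) :=
  {T | treeContrib S T ≠ 0 ∧ Elow S T = el ∧ Eup S T = eu ∧
    ∃ (t : ℕ) (v : ℕ → Fin n) (j : ℕ), IsMaxCadetSeq T t v ∧ WindowInj v 1 t ∧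
      1 ≤ j ∧ j ≤ t ∧ v j = 0 ∧ ll < j ∧ j + lu ≤ t ∧
      IsMaxSCadetWindow S T t v (j - ll) (j + lu)}

/-- The complement in `ℝ^n` of the union of the hyperplanes `xᵢ - xⱼ = s`
(`i < j`, `s ∈ S i j`) of the arrangement `A_S`. -/
def complementSet {n : ℕ} (S : Fin n → Fin n → Finset ℤ) : Set (Fin n → ℝ) :=
  {x | ∀ i j : Fin n, i < j → ∀ s ∈ S i j, x i - x j ≠ (s : ℝ)}

/-- The number of regions `r_S` of the arrangement `A_S`: the number of connected
components of the complement of its hyperplanes. -/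
noncomputable def numRegions {n : ℕ} (S : Fin n → Fin n → Finset ℤ) : ℕ :=
  Nat.card (ConnectedComponents ↥(complementSet S))

/-- A rooted labeled plane tree with `n` nodes and arbitrary numbers of children:
`nchild u` is the total number of (linearly ordered) children of the node `u`, and
`pos v` the position of the node `v` among the children of its parent (so
`lsib v = pos v` and `rsib v = nchild (parent v) - 1 - pos v`). Children not occupied
by nodes are unlabeled leaves. -/
structure LPTree (n : ℕ) where
  root : Fin n
  parent : Fin n → Fin n
  pos : Fin n → ℕ
  nchild : Fin n → ℕ
  parent_root : parent root = root
  reaches_root : ∀ v : Fin n, ∃ k : ℕ, parent^[k] v = root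
  pos_lt : ∀ v : Fin n, v ≠ root → pos v < nchild (parent v)
  pos_inj : ∀ v w : Fin n, v ≠ root → w ≠ root → parent v = parent w → pos v = pos w → v = w

/-- Membership in the set `𝔗(S)`: the root is the node `1`, the node `1` has `2m+2`
children, every other node has exactly one child, and every node `k ≠ 1` satisfies
`lsib k ∈ S⁻₁ₖ` or `rsib k ∈ S⁻ₖ₁`. -/
def IsFrakT {n : ℕ} [NeZero n] (S : Fin n → Fin n → Finset ℤ) (T : LPTree n) : Prop :=
  T.root = 0 ∧ T.nchild 0 = 2 * mOf S + 2 ∧ (∀ v : Fin n, v ≠ 0 → T.nchild v = 1) ∧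
    ∀ v : Fin n, v ≠ 0 →
      (T.pos v ∈ Sminus S 0 v ∨ (T.nchild (T.parent v) - 1 - T.pos v) ∈ Sminus S v 0)

/-- For an `S`-connected cadet sequence `(v 1, …, v k)` whose maximal `S`-cadet
sequences are the windows `[a r, b r]` (`1 ≤ r ≤ k'`, in increasing order of last index),
`LastIdx a b k' j` is the index of the largest-indexed node of `X_j \ X_{j+1}`
(with `X_{k'+1} = {0}` containing no node of the sequence). -/
def LastIdx (a b : ℕ → ℕ) (k' j : ℕ) : ℕ :=
  ((Finset.Icc (a j) (b j)) \
    (if j = k' then (∅ : Finset ℕ) else Finset.Icc (a (j + 1)) (b (j + 1)))).sup id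

/-- `X_i` reaches `X_j`: the parent of the largest-indexed node of `X_j \ X_{j+1}`
belongs to `X_i`, with the conventions `X_0 = {0}`, `parent (v 1) = 0`
(the index `0` plays the role of `X_0`). -/
def Reaches (a b : ℕ → ℕ) (k' i j : ℕ) : Prop :=
  i < j ∧ j ≤ k' ∧
    ((i = 0 ∧ LastIdx a b k' j = 1) ∨
      (1 ≤ i ∧ 2 ≤ LastIdx a b k' j ∧ a i ≤ LastIdx a b k' j - 1 ∧
        LastIdx a b k' j - 1 ≤ b i))

/-- A successful run of the algorithm: `idx 0 = 0`; at each step, the next term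
`idx (j+1)` is the smallest-indexed maximal `S`-cadet sequence reached by `X_{idx j}`
but not reached by any `X_{idx l}` with `l < j`; the run terminates at `k'`
after `t` steps. -/
def AlgRun (a b : ℕ → ℕ) (k' t : ℕ) (idx : ℕ → ℕ) : Prop :=
  idx 0 = 0 ∧ idx t = k' ∧ (∀ j, j < t → idx j ≠ k') ∧
    ∀ j, j < t →
      Reaches a b k' (idx j) (idx (j + 1)) ∧
        (∀ l, l < j → ¬ Reaches a b k' (idx l) (idx (j + 1))) ∧
        ∀ r, r < idx (j + 1) → Reaches a b k' (idx j) r → ∃ l, l < j ∧ Reaches a b k' (idx l) r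

/-- Condition (2) of Proposition 4.5 (with lower 1-length `i` and upper 1-length `k`),
for the maximal cadet sequence `(v 1, …, v t)` containing the node `1 = v j`. -/
def Cond9 {n m : ℕ} (S : Fin n → Fin n → Finset ℤ) (T : PlaneTree n m)
    (t : ℕ) (v : ℕ → Fin n) (j i k : ℕ) : Prop :=
  i < j ∧ k ≤ t - j ∧
    (∀ s : ℕ, 1 ≤ s → s ≤ t → (s < j - i - 1 ∨ j + k + 1 < s) →
      IsMaxSCadetWindow S T t v s s) ∧
    IsMaxSCadetWindow S T t v (j - i) (j + k) ∧
    (j - i ≠ 1 → IsMaxSCadetWindow S T t v (j - i - 1) (j - 1)) ∧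
    (j - i = 1 → i = 0) ∧
    (j + k ≠ t → IsMaxSCadetWindow S T t v (j + 1) (j + k + 1)) ∧
    (j + k = t → k = 0) ∧
    ∀ a' b' : ℕ, IsMaxSCadetWindow S T t v a' b' →
      ((a' = b' ∧ (a' < j - i - 1 ∨ j + k + 1 < a')) ∨ (a' = j - i ∧ b' = j + k) ∨
        (j - i ≠ 1 ∧ a' = j - i - 1 ∧ b' = j - 1) ∨ (j + k ≠ t ∧ a' = j + 1 ∧ b' = j + k + 1))


/-!
Removing the box that contains `v (c + 1)` from a boxing of `X_c = (v (c + 1), …, v k)` leaves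
a boxing of some `X_j`, so `F c := (-1) ^ (k - c) * r_S(X_c)` satisfies `F k = 1` and
`F c = -∑_{c < j < φ c} F j`, where `φ = nextCut a b k'` is read off the maximal `S`-cadet
sequences. For the tail sums `G c = ∑_{c ≤ j ≤ k} F j` this says `G c = G (φ c)`, so
`F 0 = G 0 - G 1` only changes sign along the interleaved orbits `0, 1, φ 0, φ 1, φ (φ 0), …`.
Either the two orbits merge, and then `F 0 = 0`, or after `t` steps they reach `k` and `k + 1`,
and then `F 0 = (-1) ^ t`. The second case is exactly a successful run of the algorithm: its
`(j + 1)`-st index is the last maximal `S`-cadet sequence starting at or before the node after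
the `j`-th point of the interleaved orbits.
-/

open Finset

namespace PlaneTree

variable {n m : ℕ} {T : PlaneTree n m}

theorem IsCadet.right_unique {u w w' : Fin n} (h : T.IsCadet u w) (h' : T.IsCadet u w') :
    w = w' :=
  T.pos_inj w w' h.1.1 h'.1.1 (h.1.2.trans h'.1.2.symm) (le_antisymm (h'.2 w h.1) (h.2 w' h'.1))

theorem IsCadet.left_unique {u u' w : Fin n} (h : T.IsCadet u w) (h' : T.IsCadet u' w) :
    u = u' :=
  h.1.2.symm.trans h'.1.2

end PlaneTree

section Windows

variable {n m : ℕ} {S : Fin n → Fin n → Finset ℤ} {T : PlaneTree n m} {v w : ℕ → Fin n}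

theorem IsCadetWindow.mono {a b i j : ℕ} (h : IsCadetWindow T v a b) (hai : a ≤ i)
    (hij : i ≤ j) (hjb : j ≤ b) : IsCadetWindow T v i j :=
  ⟨h.1.trans hai, hij, fun p hip hpj => h.2.2 p (hai.trans_lt hip) (hpj.trans hjb)⟩

theorem IsSCadetWindow.mono {a b i j : ℕ} (h : IsSCadetWindow S T v a b) (hai : a ≤ i)
    (hij : i ≤ j) (hjb : j ≤ b) : IsSCadetWindow S T v i j :=
  ⟨h.1.mono hai hij hjb, fun p q hip hpq hqj => h.2 p q (hai.trans hip) hpq (hqj.trans hjb)⟩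

theorem isSCadetWindow_self {p : ℕ} (hp : 1 ≤ p) : IsSCadetWindow S T v p p :=
  ⟨⟨hp, le_rfl, fun _ _ h => absurd h (by omega)⟩, fun _ _ _ _ h => absurd h (by omega)⟩

theorem IsSCadetWindow.congr {i j : ℕ} (h : IsSCadetWindow S T v i j)
    (hvw : ∀ p, i ≤ p → p ≤ j → v p = w p) : IsSCadetWindow S T w i j := by
  obtain ⟨⟨hi, hij, hcad⟩, hS⟩ := h
  refine ⟨⟨hi, hij, fun p hip hpj => ?_⟩, fun p q hip hpq hqj => ?_⟩
  · rw [← hvw p (by omega) hpj, ← hvw (p - 1) (by omega) (by omega)]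
    exact hcad p hip hpj
  · have hsum : ∑ x ∈ Icc (p + 1) q, T.lsib (w x) =
        ∑ x ∈ Icc (p + 1) q, T.lsib (v x) := sum_congr rfl fun x hx => by
      rw [mem_Icc] at hx
      rw [hvw x (by omega) (by omega)]
    rw [hsum, ← hvw p hip (by omega), ← hvw q (by omega) hqj]
    exact hS p q hip hpq hqj

theorem isSCadetWindow_comp_add_iff {e i j : ℕ} (hi : 1 ≤ i) :
    IsSCadetWindow S T (fun p => v (p + e)) i j ↔ IsSCadetWindow S T v (i + e) (j + e) := by
  have hsum : ∀ p q, ∑ x ∈ Icc (p + 1) q, T.lsib (v (x + e)) =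
      ∑ x ∈ Icc (p + e + 1) (q + e), T.lsib (v x) := fun p q => by
    rw [show p + e + 1 = p + 1 + e by ring, ← map_add_right_Icc, sum_map]
    rfl
  constructor
  · rintro ⟨⟨-, hij, hcad⟩, hS⟩
    refine ⟨⟨by omega, by omega, fun p hip hpj => ?_⟩, fun p q hip hpq hqj => ?_⟩
    · have := hcad (p - e) (by omega) (by omega)
      dsimp only at this
      rwa [show p - e - 1 + e = p - 1 by omega, show p - e + e = p by omega] at this
    · have := hS (p - e) (q - e) (by omega) (by omega) (by omega)
      dsimp only at this
      rwa [hsum, show p - e + e = p by omega, show q - e + e = q by omega] at this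
  · rintro ⟨⟨-, hij, hcad⟩, hS⟩
    refine ⟨⟨hi, by omega, fun p hip hpj => ?_⟩, fun p q hip hpq hqj => ?_⟩
    · have := hcad (p + e) (by omega) (by omega)
      rwa [show p + e - 1 = p - 1 + e by omega] at this
    · rw [hsum]
      exact hS (p + e) (q + e) (by omega) (by omega) (by omega)

theorem IsSCadetWindow.exists_isMaxSCadetWindow {k i j : ℕ} (h : IsSCadetWindow S T v i j)
    (hjk : j ≤ k) : ∃ A B, A ≤ i ∧ j ≤ B ∧ IsMaxSCadetWindow S T k v A B := by
  have hA : ∃ A, IsSCadetWindow S T v A j := ⟨i, h⟩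
  have hAwin : IsSCadetWindow S T v (Nat.find hA) j := Nat.find_spec hA
  have hAi : Nat.find hA ≤ i := Nat.find_min' hA h
  have hjB : j ≤ Nat.findGreatest (IsSCadetWindow S T v (Nat.find hA)) k :=
    Nat.le_findGreatest hjk hAwin
  refine ⟨_, _, hAi, hjB, Nat.findGreatest_le k, Nat.findGreatest_spec hjk hAwin, ?_, ?_⟩
  · have := hAwin.1.1
    have := hAwin.1.2.1
    exact or_iff_not_imp_left.mpr fun hA1 hwin =>
      Nat.find_min hA (m := Nat.find hA - 1) (by omega) (hwin.mono le_rfl (by omega) hjB)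
  · refine or_iff_not_imp_left.mpr fun hBk => Nat.findGreatest_is_greatest (lt_add_one _) ?_
    have := Nat.findGreatest_le (P := IsSCadetWindow S T v (Nat.find hA)) k
    omega

end Windows

section Injectivity

variable {n : ℕ} {v : ℕ → Fin n} {a b : ℕ}

theorem WindowInj.mem_image_Icc_iff (h : WindowInj v a b) {i j p : ℕ} (hai : a ≤ i)
    (hjb : j ≤ b) (hap : a ≤ p) (hpb : p ≤ b) :
    v p ∈ (Icc i j).image v ↔ i ≤ p ∧ p ≤ j := by
  simp only [mem_image, mem_Icc]
  constructor
  · rintro ⟨q, ⟨hiq, hqj⟩, hq⟩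
    have := h q p (by omega) (by omega) hap hpb hq
    omega
  · exact fun hp => ⟨p, hp, rfl⟩

theorem WindowInj.card_image_Icc (h : WindowInj v a b) {i j : ℕ} (hai : a ≤ i) (hjb : j ≤ b) :
    ((Icc i j).image v).card = j + 1 - i := by
  rw [card_image_of_injOn, Nat.card_Icc]
  intro p hp q hq hpq
  simp only [coe_Icc, Set.mem_Icc] at hp hq
  exact h p q (by omega) (by omega) (by omega) (by omega) hpq

theorem WindowInj.eq_of_image_Icc_eq (h : WindowInj v a b) {i j i' j' : ℕ} (hai : a ≤ i)
    (hij : i ≤ j) (hjb : j ≤ b) (hai' : a ≤ i') (hij' : i' ≤ j') (hjb' : j' ≤ b)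
    (heq : (Icc i j).image v = (Icc i' j').image v) : i = i' ∧ j = j' := by
  have h1 := (h.mem_image_Icc_iff hai' hjb' (p := i) hai (by omega)).mp
    (heq ▸ mem_image_of_mem v (mem_Icc.mpr ⟨le_rfl, hij⟩))
  have h2 := (h.mem_image_Icc_iff hai hjb (p := i') hai' (by omega)).mp
    (heq ▸ mem_image_of_mem v (mem_Icc.mpr ⟨le_rfl, hij'⟩))
  have h3 := (h.mem_image_Icc_iff hai' hjb' (p := j) (by omega) hjb).mp
    (heq ▸ mem_image_of_mem v (mem_Icc.mpr ⟨hij, le_rfl⟩))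
  have h4 := (h.mem_image_Icc_iff hai hjb (p := j') (by omega) hjb').mp
    (heq ▸ mem_image_of_mem v (mem_Icc.mpr ⟨hij', le_rfl⟩))
  omega

end Injectivity

theorem Finset.image_Icc_add_eq {α : Type*} {V v : ℕ → α} [DecidableEq α] {e i j : ℕ}
    (h : ∀ p, i ≤ p → p ≤ j → V (p + e) = v p) :
    (Icc (i + e) (j + e)).image V = (Icc i j).image v := by
  rw [← map_add_right_Icc, map_eq_image, image_image]
  exact image_congr fun p hp => h p (mem_Icc.mp hp).1 (mem_Icc.mp hp).2

section Extension

variable {n m : ℕ} {S : Fin n → Fin n → Finset ℤ} {T : PlaneTree n m} {k k₀ : ℕ}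
  {v V : ℕ → Fin n}

theorem IsMaxCadetSeq.apply_sub_eq (hmax : IsMaxCadetSeq T k₀ V) (hcad : IsCadetWindow T v 1 k)
    {α p : ℕ} (hα : 1 ≤ α) (hαk : α ≤ k₀) (hp : p ≤ k) (h : V α = v p) :
    ∀ d < p, d < α ∧ V (α - d) = v (p - d) := by
  intro d
  induction d with
  | zero => exact fun _ => ⟨hα, h⟩
  | succ d ih =>
    intro hd
    obtain ⟨hdα, hV⟩ := ih (by omega)
    have hc : T.IsCadet (v (p - d - 1)) (v (p - d)) := hcad.2.2 (p - d) (by omega) (by omega)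
    have hα2 : α - d ≠ 1 := fun h1 => hmax.2.2 _ (by rwa [← h1, hV])
    have hC : T.IsCadet (V (α - d - 1)) (V (α - d)) := hmax.1.2.2 _ (by omega) (by omega)
    rw [hV] at hC
    rw [show α - (d + 1) = α - d - 1 by omega, show p - (d + 1) = p - d - 1 by omega]
    exact ⟨by omega, hC.left_unique hc⟩

theorem IsMaxCadetSeq.apply_add_eq (hmax : IsMaxCadetSeq T k₀ V) (hcad : IsCadetWindow T v 1 k)
    {α p : ℕ} (hα : 1 ≤ α) (hαk : α ≤ k₀) (hp : 1 ≤ p) (h : V α = v p) :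
    ∀ d, p + d ≤ k → α + d ≤ k₀ ∧ V (α + d) = v (p + d) := by
  intro d
  induction d with
  | zero => exact fun _ => ⟨hαk, h⟩
  | succ d ih =>
    intro hd
    obtain ⟨hdα, hV⟩ := ih (by omega)
    have hc : T.IsCadet (v (p + d)) (v (p + d + 1)) := hcad.2.2 (p + d + 1) (by omega) hd
    have hne : α + d ≠ k₀ := fun hk => hmax.2.1 _ (by rw [← hk, hV]; exact hc.1)
    have hC : T.IsCadet (V (α + d)) (V (α + d + 1)) := hmax.1.2.2 _ (by omega) (by omega)
    rw [hV] at hC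
    exact ⟨by omega, hC.right_unique hc⟩

theorem IsMaxCadetSeq.exists_shift (hmax : IsMaxCadetSeq T k₀ V) (hcad : IsCadetWindow T v 1 k)
    {α p : ℕ} (hα : 1 ≤ α) (hαk : α ≤ k₀) (hp : 1 ≤ p) (hpk : p ≤ k) (h : V α = v p) :
    ∃ e, k + e ≤ k₀ ∧ ∀ q, 1 ≤ q → q ≤ k → V (q + e) = v q := by
  have hpα := (hmax.apply_sub_eq hcad hα hαk hpk h (p - 1) (by omega)).1
  refine ⟨α - p, by have := hmax.apply_add_eq hcad hα hαk hp h (k - p) (by omega); omega,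
    fun q hq hqk => ?_⟩
  rcases le_or_gt q p with hqp | hqp
  · have := (hmax.apply_sub_eq hcad hα hαk hpk h (p - q) (by omega)).2
    rwa [show α - (p - q) = q + (α - p) by omega, show p - (p - q) = q by omega] at this
  · have := (hmax.apply_add_eq hcad hα hαk hp h (q - p) (by omega)).2
    rwa [show α + (q - p) = q + (α - p) by omega, show p + (q - p) = q by omega] at this

variable (T) in
structure MaxCadetExtension (k : ℕ) (v : ℕ → Fin n) where
  len : ℕ
  seq : ℕ → Fin n
  isMax : IsMaxCadetSeq T len seq
  inj : WindowInj seq 1 len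
  shift : ℕ
  add_shift_le : k + shift ≤ len
  seq_add_shift : ∀ p, 1 ≤ p → p ≤ k → seq (p + shift) = v p

theorem MaxCadetExtension.isSCadetWindow_iff (E : MaxCadetExtension T k v) {i j : ℕ} (hi : 1 ≤ i)
    (hjk : j ≤ k) :
    IsSCadetWindow S T v i j ↔ IsSCadetWindow S T E.seq (i + E.shift) (j + E.shift) := by
  rw [← isSCadetWindow_comp_add_iff hi]
  have hvw : ∀ p, i ≤ p → p ≤ j → v p = E.seq (p + E.shift) := fun p hip hpj =>
    (E.seq_add_shift p (by omega) (by omega)).symm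
  exact ⟨fun h => h.congr hvw, fun h => h.congr fun p hip hpj => (hvw p hip hpj).symm⟩

theorem exists_maxCadetExtension (hcad : IsCadetWindow T v 1 k) {i j : ℕ} (hi : 1 ≤ i)
    (hij : i ≤ j) (hjk : j ≤ k) (hZ : IsMaxSCadetSet S T ((Icc i j).image v)) :
    ∃ E : MaxCadetExtension T k v,
      IsMaxSCadetWindow S T E.len E.seq (i + E.shift) (j + E.shift) := by
  obtain ⟨k₀, V, A, B, hmax, hVinj, hwin, heq⟩ := hZ
  obtain ⟨hA, hAB, -⟩ := hwin.2.1.1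
  have hmem : v i ∈ (Icc A B).image V :=
    heq ▸ mem_image_of_mem v (mem_Icc.mpr ⟨le_rfl, hij⟩)
  obtain ⟨α, hαAB, hα⟩ := mem_image.mp hmem
  rw [mem_Icc] at hαAB
  obtain ⟨e, hek, he⟩ := hmax.exists_shift hcad (by omega) (by have := hwin.1; omega) hi
    (hij.trans hjk) hα
  have himg : (Icc A B).image V = (Icc (i + e) (j + e)).image V := by
    rw [← heq, image_Icc_add_eq fun p hip hpj => he p (by omega) (by omega)]
  obtain ⟨rfl, rfl⟩ := hVinj.eq_of_image_Icc_eq hA hAB hwin.1 (by omega) (by omega) (by omega)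
    himg
  exact ⟨⟨k₀, V, hmax, hVinj, e, hek, he⟩, hwin⟩

theorem isSCadetWindow_of_isMaxSCadetSet (hcad : IsCadetWindow T v 1 k) {i j : ℕ} (hi : 1 ≤ i)
    (hij : i ≤ j) (hjk : j ≤ k) (hZ : IsMaxSCadetSet S T ((Icc i j).image v)) :
    IsSCadetWindow S T v i j ∧ (j < k → ¬ IsSCadetWindow S T v i (j + 1)) := by
  obtain ⟨E, hwin⟩ := exists_maxCadetExtension hcad hi hij hjk hZ
  refine ⟨(E.isSCadetWindow_iff hi hjk).mpr hwin.2.1, fun hjk' h => ?_⟩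
  rw [E.isSCadetWindow_iff hi hjk', show j + 1 + E.shift = j + E.shift + 1 by ring] at h
  have := E.add_shift_le
  exact hwin.2.2.2.elim (fun h' => by omega) (· h)

end Extension

section Boxings

variable {n m : ℕ} {S : Fin n → Fin n → Finset ℤ} {T : PlaneTree n m} {X Y : Finset (Fin n)}
  {B : Finset (Finset (Fin n))}

theorem IsSBox.nonempty (h : IsSBox S T Y) : Y.Nonempty := by
  obtain ⟨l, w, hw, -, rfl⟩ := h
  exact ⟨w 1, mem_image_of_mem w (mem_Icc.mpr ⟨le_rfl, hw.1.2.1⟩)⟩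

theorem IsSBoxingOf.eq_of_mem (h : IsSBoxingOf S T X B) {Z : Finset (Fin n)} {u : Fin n}
    (hY : Y ∈ B) (hZ : Z ∈ B) (huY : u ∈ Y) (huZ : u ∈ Z) : Y = Z := by
  obtain ⟨W, -, hW⟩ := h.2 u ((h.1 Y hY).2 huY)
  exact (hW Y ⟨hY, huY⟩).trans (hW Z ⟨hZ, huZ⟩).symm

theorem IsSBoxingOf.card_le (h : IsSBoxingOf S T X B) : B.card ≤ X.card := by
  refine (card_le_card_biUnion (f := id) (fun Y hY Z hZ hYZ => ?_)
    fun Y hY => (h.1 Y hY).1.nonempty).trans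
    (card_le_card (biUnion_subset.mpr fun Y hY => (h.1 Y hY).2))
  exact disjoint_left.mpr fun u huY huZ => hYZ (h.eq_of_mem hY hZ huY huZ)

theorem IsSBoxingOf.erase (h : IsSBoxingOf S T X B) (hY : Y ∈ B) :
    IsSBoxingOf S T (X \ Y) (B.erase Y) := by
  constructor
  · intro Z hZ
    obtain ⟨hZY, hZB⟩ := mem_erase.mp hZ
    exact ⟨(h.1 Z hZB).1, fun u hu => mem_sdiff.mpr
      ⟨(h.1 Z hZB).2 hu, fun huY => hZY (h.eq_of_mem hZB hY hu huY)⟩⟩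
  · intro u hu
    obtain ⟨huX, huY⟩ := mem_sdiff.mp hu
    obtain ⟨Z, ⟨hZB, huZ⟩, hZ⟩ := h.2 u huX
    exact ⟨Z, ⟨mem_erase.mpr ⟨fun hZY => huY (hZY ▸ huZ), hZB⟩, huZ⟩,
      fun W hW => hZ W ⟨mem_of_mem_erase hW.1, hW.2⟩⟩

theorem IsSBoxingOf.insert (h : IsSBoxingOf S T (X \ Y) B) (hY : IsSBox S T Y) (hYX : Y ⊆ X) :
    IsSBoxingOf S T X (insert Y B) := by
  constructor
  · intro Z hZ
    rcases mem_insert.mp hZ with rfl | hZB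
    · exact ⟨hY, hYX⟩
    · exact ⟨(h.1 Z hZB).1, (h.1 Z hZB).2.trans sdiff_subset⟩
  · intro u hu
    by_cases huY : u ∈ Y
    · refine ⟨Y, ⟨mem_insert_self _ _, huY⟩, fun W ⟨hW, huW⟩ => ?_⟩
      rcases mem_insert.mp hW with rfl | hWB
      · rfl
      · exact absurd huY (mem_sdiff.mp ((h.1 W hWB).2 huW)).2
    · obtain ⟨Z, ⟨hZB, huZ⟩, hZ⟩ := h.2 u (mem_sdiff.mpr ⟨hu, huY⟩)
      refine ⟨Z, ⟨mem_insert_of_mem hZB, huZ⟩, fun W ⟨hW, huW⟩ => ?_⟩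
      rcases mem_insert.mp hW with rfl | hWB
      · exact absurd huW huY
      · exact hZ W ⟨hWB, huW⟩

theorem IsSBoxingOf.notMem (h : IsSBoxingOf S T (X \ Y) B) (hY : Y.Nonempty) : Y ∉ B :=
  fun hYB => hY.elim fun _ hu => (mem_sdiff.mp ((h.1 Y hYB).2 hu)).2 hu

theorem contrib_empty : contrib S T (∅ : Finset (Fin n)) = 1 := by
  have hB : ∀ B, IsSBoxingOf S T ∅ B ↔ B = ∅ := fun B => by
    refine ⟨fun h => eq_empty_of_forall_notMem fun Y hY => ?_, fun h => h ▸ ?_⟩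
    · obtain ⟨u, hu⟩ := (h.1 Y hY).1.nonempty
      exact notMem_empty u ((h.1 Y hY).2 hu)
    · exact ⟨fun Y hY => absurd hY (notMem_empty Y),
        fun u hu => absurd hu (notMem_empty u)⟩
  simp [contrib, hB]

theorem sum_boxings_containing_eq (hY : IsSBox S T Y) (hYX : Y ⊆ X) :
    ∑ B : Finset (Finset (Fin n)),
      (if IsSBoxingOf S T X B ∧ Y ∈ B then (-1 : ℤ) ^ (X.card - B.card) else 0) =
      (-1) ^ (Y.card - 1) * contrib S T (X \ Y) := by
  rw [contrib, mul_sum, ← sum_filter]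
  simp only [mul_ite, mul_zero]
  rw [← sum_filter]
  have hYne := hY.nonempty
  have hcard := card_sdiff_add_card_eq_card hYX
  refine sum_nbij' (fun B => B.erase Y) (fun B => insert Y B) ?_ ?_ ?_ ?_ ?_
  · intro B hB
    simp only [mem_filter, mem_univ, true_and] at hB ⊢
    exact hB.1.erase hB.2
  · intro B hB
    simp only [mem_filter, mem_univ, true_and] at hB ⊢
    exact ⟨hB.insert hY hYX, mem_insert_self _ _⟩
  · intro B hB
    simp only [mem_filter, mem_univ, true_and] at hB
    exact insert_erase hB.2
  · intro B hB
    simp only [mem_filter, mem_univ, true_and] at hB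
    exact erase_insert (hB.notMem hYne)
  · intro B hB
    simp only [mem_filter, mem_univ, true_and] at hB
    have h1 := card_erase_add_one hB.2
    have h2 := (hB.1.erase hB.2).card_le
    have h3 := hYne.card_pos
    rw [← pow_add]
    congr 1
    omega

theorem contrib_eq_sum_boxes {u : Fin n} (hu : u ∈ X) :
    contrib S T X = ∑ Y ∈ univ.filter (fun Y => IsSBox S T Y ∧ u ∈ Y ∧ Y ⊆ X),
      (-1) ^ (Y.card - 1) * contrib S T (X \ Y) := by
  rw [sum_congr rfl fun Y hY => (sum_boxings_containing_eq (mem_filter.mp hY).2.1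
    (mem_filter.mp hY).2.2.2).symm, sum_comm, contrib]
  refine sum_congr rfl fun B _ => ?_
  split_ifs with hB
  · obtain ⟨Y₀, ⟨hY₀B, huY₀⟩, hY₀⟩ := hB.2 u hu
    have hmem : Y₀ ∈ univ.filter (fun Y => IsSBox S T Y ∧ u ∈ Y ∧ Y ⊆ X) :=
      mem_filter.mpr ⟨mem_univ _, hB.1 Y₀ hY₀B |>.1, huY₀, (hB.1 Y₀ hY₀B).2⟩
    rw [sum_eq_single_of_mem Y₀ hmem fun Y hY hne => if_neg fun h =>
      hne (hY₀ Y ⟨h.2, (mem_filter.mp hY).2.2.1⟩), if_pos ⟨hB, hY₀B⟩]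
  · exact (sum_eq_zero fun Y _ => if_neg fun h => hB h.1).symm

end Boxings

section Chain

variable {n m : ℕ} {S : Fin n → Fin n → Finset ℤ} {T : PlaneTree n m} {k : ℕ} {v : ℕ → Fin n}

theorem MaxCadetExtension.exists_eq_add (E : MaxCadetExtension T k v) {l : ℕ} {w : ℕ → Fin n}
    (hw : IsCadetWindow T w 1 l) (hsub : ∀ q, 1 ≤ q → q ≤ l → ∃ p, 1 ≤ p ∧ p ≤ k ∧ w q = v p) :
    ∃ d, l + d ≤ k ∧ ∀ q, 1 ≤ q → q ≤ l → w q = v (q + d) := by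
  have hseq : ∀ q, 1 ≤ q → q ≤ l → ∃ p, 1 ≤ p ∧ p ≤ k ∧ w q = E.seq (p + E.shift) :=
    fun q hq hql => (hsub q hq hql).imp fun p ⟨hp, hpk, h⟩ => ⟨hp, hpk, h.trans
      (E.seq_add_shift p hp hpk).symm⟩
  have hlen := E.add_shift_le
  obtain ⟨p₁, hp₁, hp₁k, h₁⟩ := hseq 1 le_rfl hw.2.1
  obtain ⟨e, hel, he⟩ := E.isMax.exists_shift hw (by omega) (by omega) le_rfl hw.2.1 h₁.symm
  have hidx : ∀ q, 1 ≤ q → q ≤ l → ∃ p, 1 ≤ p ∧ p ≤ k ∧ q + e = p + E.shift := by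
    intro q hq hql
    obtain ⟨p, hp, hpk, h⟩ := hseq q hq hql
    exact ⟨p, hp, hpk, E.inj _ _ (by omega) (by omega) (by omega) (by omega)
      ((he q hq hql).trans h)⟩
  obtain ⟨p, hp, -, h1⟩ := hidx 1 le_rfl hw.2.1
  refine ⟨e - E.shift, ?_, fun q hq hql => ?_⟩
  · obtain ⟨p, -, hpk, hl⟩ := hidx l hw.2.1 le_rfl
    omega
  · obtain ⟨p, hp, hpk, hq'⟩ := hidx q hq hql
    rw [← he q hq hql, ← E.seq_add_shift (q + (e - E.shift)) (by omega) (by omega)]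
    congr 1
    omega

theorem isSBox_and_mem_iff (E : MaxCadetExtension T k v) (hinj : WindowInj v 1 k) {c : ℕ}
    (hc : c < k) {Y : Finset (Fin n)} :
    (IsSBox S T Y ∧ v (c + 1) ∈ Y ∧ Y ⊆ (Icc (c + 1) k).image v) ↔
      ∃ j, c < j ∧ j ≤ k ∧ IsSCadetWindow S T v (c + 1) j ∧ Y = (Icc (c + 1) j).image v := by
  constructor
  · rintro ⟨⟨l, w, hw, -, rfl⟩, hu, hsub⟩
    have hmem : ∀ q, 1 ≤ q → q ≤ l → ∃ p, c + 1 ≤ p ∧ p ≤ k ∧ w q = v p := fun q hq hql => by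
      obtain ⟨p, hp, hpw⟩ := mem_image.mp
        (hsub (mem_image_of_mem w (mem_Icc.mpr ⟨hq, hql⟩)))
      exact ⟨p, (mem_Icc.mp hp).1, (mem_Icc.mp hp).2, hpw.symm⟩
    obtain ⟨d, hdk, hd⟩ := E.exists_eq_add hw.1 fun q hq hql =>
      (hmem q hq hql).imp fun p ⟨hp, hpk, h⟩ => ⟨by omega, hpk, h⟩
    have hl := hw.1.2.1
    obtain ⟨q₀, hq₀, hwq₀⟩ := mem_image.mp hu
    rw [mem_Icc] at hq₀
    have h1 := hinj _ _ (by omega) (by omega) (by omega) (by omega)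
      ((hd q₀ hq₀.1 hq₀.2).symm.trans hwq₀)
    obtain ⟨p, hp, hpk, hwp⟩ := hmem 1 le_rfl hl
    have h2 := hinj _ _ (by omega) (by omega) (by omega) (by omega)
      ((hd 1 le_rfl hl).symm.trans hwp)
    obtain rfl : d = c := by omega
    refine ⟨l + d, by omega, hdk, ?_, ?_⟩
    · rw [show d + 1 = 1 + d by ring, ← isSCadetWindow_comp_add_iff le_rfl]
      exact hw.congr hd
    · rw [show d + 1 = 1 + d by ring, image_Icc_add_eq fun q hq hql => (hd q hq hql).symm]
  · rintro ⟨j, hcj, hjk, hwin, rfl⟩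
    have himg : (Icc (1 + c) (j - c + c)).image v =
        (Icc 1 (j - c)).image fun q => v (q + c) :=
      image_Icc_add_eq fun _ _ _ => rfl
    rw [show 1 + c = c + 1 by ring, show j - c + c = j by omega] at himg
    refine ⟨⟨j - c, fun q => v (q + c), ?_, fun p q hp hpj hq hqj h => ?_, himg⟩,
      mem_image_of_mem v (mem_Icc.mpr ⟨le_rfl, hcj⟩),
      image_subset_image (Icc_subset_Icc le_rfl hjk)⟩
    · rwa [isSCadetWindow_comp_add_iff le_rfl, show 1 + c = c + 1 by ring,
        show j - c + c = j by omega]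
    · have := hinj _ _ (by omega) (by omega) (by omega) (by omega) h
      omega

theorem contrib_image_Icc_eq_sum (E : MaxCadetExtension T k v) (hinj : WindowInj v 1 k) {c : ℕ}
    (hc : c < k) :
    contrib S T ((Icc (c + 1) k).image v) =
      ∑ j ∈ (Ioc c k).filter (IsSCadetWindow S T v (c + 1)),
        (-1) ^ (j - c - 1) * contrib S T ((Icc (j + 1) k).image v) := by
  have hboxes : univ.filter (fun Y => IsSBox S T Y ∧ v (c + 1) ∈ Y ∧
      Y ⊆ (Icc (c + 1) k).image v) =
      ((Ioc c k).filter (IsSCadetWindow S T v (c + 1))).image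
        fun j => (Icc (c + 1) j).image v := by
    ext Y
    simp only [mem_filter, mem_univ, true_and, isSBox_and_mem_iff E hinj hc,
      mem_image, mem_Ioc]
    exact ⟨fun ⟨j, h1, h2, h3, h4⟩ => ⟨j, ⟨⟨h1, h2⟩, h3⟩, h4.symm⟩,
      fun ⟨j, ⟨⟨h1, h2⟩, h3⟩, h4⟩ => ⟨j, h1, h2, h3, h4.symm⟩⟩
  rw [contrib_eq_sum_boxes (mem_image_of_mem v (mem_Icc.mpr ⟨le_rfl, hc⟩)),
    hboxes, sum_image fun j hj j' hj' h => ?_]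
  · refine sum_congr rfl fun j hj => ?_
    obtain ⟨hcj, hjk⟩ := mem_Ioc.mp (mem_filter.mp hj).1
    have hinjOn : Set.InjOn v (Icc (c + 1) k) := fun p hp q hq h => by
      simp only [coe_Icc, Set.mem_Icc] at hp hq
      exact hinj p q (by omega) hp.2 (by omega) hq.2 h
    have hdiff : Icc (c + 1) k \ Icc (c + 1) j = Icc (j + 1) k := by
      ext p
      simp only [mem_sdiff, mem_Icc]
      omega
    rw [hinj.card_image_Icc (by omega) hjk, ← image_sdiff_of_injOn hinjOn
      (Icc_subset_Icc le_rfl hjk), hdiff, show j + 1 - (c + 1) - 1 = j - c - 1 by omega]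
  · obtain ⟨hcj, hjk⟩ := mem_Ioc.mp (mem_filter.mp hj).1
    obtain ⟨hcj', hjk'⟩ := mem_Ioc.mp (mem_filter.mp hj').1
    exact (hinj.eq_of_image_Icc_eq (by omega) (by omega) hjk (by omega) (by omega) hjk' h).2

end Chain

/-- The shape of the maximal `S`-cadet subsequences `[a r, b r]` of `(v 1, …, v k)`, listed by
their last node. -/
structure IntervalChain (k k' : ℕ) (a b : ℕ → ℕ) : Prop where
  one_le : 1 ≤ k'
  a_le_b : ∀ r, 1 ≤ r → r ≤ k' → a r ≤ b r
  a_lt : ∀ r s, 1 ≤ r → r < s → s ≤ k' → a r < a s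
  b_lt : ∀ r s, 1 ≤ r → r < s → s ≤ k' → b r < b s
  a_one : a 1 = 1
  b_last : b k' = k
  a_succ_le : ∀ r, 1 ≤ r → r < k' → a (r + 1) ≤ b r + 1

/-- The index of the last node of `X_i`, where `X_0 = {0}` sits at index `0`. -/
def endIdx (b : ℕ → ℕ) (i : ℕ) : ℕ := if i = 0 then 0 else b i

@[simp] theorem endIdx_zero (b : ℕ → ℕ) : endIdx b 0 = 0 := rfl

theorem endIdx_of_ne_zero (b : ℕ → ℕ) {i : ℕ} (hi : i ≠ 0) : endIdx b i = b i := if_neg hi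

def lastWindow (a : ℕ → ℕ) (k' c : ℕ) : ℕ := Nat.findGreatest (fun r => a r ≤ c + 1) k'

namespace IntervalChain

variable {k k' : ℕ} {a b : ℕ → ℕ}

theorem of_cover (hk' : 1 ≤ k')
    (hbounds : ∀ r, 1 ≤ r → r ≤ k' → 1 ≤ a r ∧ a r ≤ b r ∧ b r ≤ k)
    (hmono : ∀ r s, 1 ≤ r → r < s → s ≤ k' → b r < b s)
    (hcover : ∀ p, 1 ≤ p → p ≤ k → ∃ r, 1 ≤ r ∧ r ≤ k' ∧ a r ≤ p ∧ p ≤ b r)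
    (hmax : ∀ r s, 1 ≤ r → r ≤ k' → 1 ≤ s → s ≤ k' → a s ≤ a r → b s ≤ b r) :
    IntervalChain k k' a b := by
  have ha : ∀ r s, 1 ≤ r → r < s → s ≤ k' → a r < a s := fun r s hr hrs hs => by
    by_contra! h
    have := hmax r s hr (by omega) (by omega) hs h
    have := hmono r s hr hrs hs
    omega
  have hb1 := hbounds 1 le_rfl hk'
  have hbk := hbounds k' hk' le_rfl
  refine ⟨hk', fun r hr hrk => (hbounds r hr hrk).2.1, ha, hmono, ?_, ?_, ?_⟩
  · obtain ⟨r, hr, hrk, har, -⟩ := hcover 1 le_rfl (by omega)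
    rcases hr.lt_or_eq with h | rfl
    · have := ha 1 r le_rfl h hrk
      omega
    · omega
  · obtain ⟨r, hr, hrk, -, hbr⟩ := hcover k (by omega) le_rfl
    rcases hrk.lt_or_eq with h | rfl
    · have := hmono r k' hr h le_rfl
      have := (hbounds r hr hrk).2.2
      omega
    · exact le_antisymm hbk.2.2 hbr
  · intro r hr hrk
    have := hmono r k' hr hrk le_rfl
    obtain ⟨s, hs, hsk, has, hbs⟩ := hcover (b r + 1) (by omega) (by omega)
    have hrs : r < s := by
      by_contra! h
      rcases h.lt_or_eq with h | rfl
      · have := hmono s r hs h (by omega)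
        omega
      · omega
    rcases (show r + 1 ≤ s by omega).lt_or_eq with h | rfl
    · have := ha (r + 1) s (by omega) h hsk
      omega
    · exact has

theorem le_a (hC : IntervalChain k k' a b) {r : ℕ} (hr : 1 ≤ r) (hrk : r ≤ k') : r ≤ a r := by
  induction r, hr using Nat.le_induction with
  | base => rw [hC.a_one]
  | succ r hr ih => have := hC.a_lt r (r + 1) hr (by omega) hrk; omega

theorem b_le (hC : IntervalChain k k' a b) {r : ℕ} (hr : 1 ≤ r) (hrk : r ≤ k') : b r ≤ k := by
  rcases hrk.lt_or_eq with hlt | rfl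
  · exact (hC.b_lt r k' hr hlt le_rfl).le.trans hC.b_last.le
  · exact hC.b_last.le

theorem le_k (hC : IntervalChain k k' a b) : k' ≤ k := by
  have := hC.le_a hC.one_le le_rfl
  have := hC.a_le_b k' hC.one_le le_rfl
  have := hC.b_last
  omega

theorem one_le_k (hC : IntervalChain k k' a b) : 1 ≤ k := by
  have h1 := hC.a_le_b k' hC.one_le le_rfl
  have h2 := hC.le_a hC.one_le le_rfl
  rw [hC.b_last] at h1
  exact hC.one_le.trans (h2.trans h1)

theorem a_le_a (hC : IntervalChain k k' a b) {r s : ℕ} (hr : 1 ≤ r) (hrs : r ≤ s)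
    (hs : s ≤ k') : a r ≤ a s := by
  rcases hrs.lt_or_eq with h | rfl
  exacts [(hC.a_lt r s hr h hs).le, le_rfl]

theorem endIdx_lt (hC : IntervalChain k k' a b) {i i' : ℕ} (hii' : i < i') (hi' : i' ≤ k') :
    endIdx b i < endIdx b i' := by
  rw [endIdx_of_ne_zero b (show i' ≠ 0 by omega)]
  rcases Nat.eq_zero_or_pos i with rfl | hi
  · have := hC.a_le_b i' (by omega) hi'
    have := hC.le_a (r := i') (by omega) hi'
    rw [endIdx_zero]
    omega
  · rw [endIdx_of_ne_zero b hi.ne']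
    exact hC.b_lt i i' hi hii' hi'

theorem endIdx_mono (hC : IntervalChain k k' a b) {i i' : ℕ} (hii' : i ≤ i') (hi' : i' ≤ k') :
    endIdx b i ≤ endIdx b i' := by
  rcases hii'.lt_or_eq with h | rfl
  exacts [(hC.endIdx_lt h hi').le, le_rfl]

theorem lt_of_endIdx_lt (hC : IntervalChain k k' a b) {i i' : ℕ} (hi : i ≤ k')
    (h : endIdx b i < endIdx b i') : i < i' := by
  by_contra! hle
  exact (hC.endIdx_mono hle hi).not_gt h

theorem endIdx_last (hC : IntervalChain k k' a b) : endIdx b k' = k := by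
  rw [endIdx, if_neg (by have := hC.one_le; omega), hC.b_last]

theorem lastIdx_of_lt (hC : IntervalChain k k' a b) {j : ℕ} (hj : 1 ≤ j) (hjk : j < k') :
    LastIdx a b k' j = a (j + 1) - 1 := by
  have hlt := hC.a_lt j (j + 1) hj (by omega) hjk
  have hb := hC.b_lt j (j + 1) hj (by omega) hjk
  have hsucc := hC.a_succ_le j hj hjk
  have hab := hC.a_le_b (j + 1) (by omega) hjk
  rw [LastIdx, if_neg (by omega)]
  apply le_antisymm
  · refine Finset.sup_le fun x hx => ?_
    simp only [mem_sdiff, mem_Icc] at hx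
    simp only [id]
    omega
  · refine Finset.le_sup (f := id) ?_
    simp only [mem_sdiff, mem_Icc]
    omega

theorem lastIdx_last (hC : IntervalChain k k' a b) : LastIdx a b k' k' = k := by
  have := hC.a_le_b k' hC.one_le le_rfl
  rw [LastIdx, if_pos rfl, sdiff_empty, ← hC.b_last]
  apply le_antisymm
  · exact Finset.sup_le fun x hx => (mem_Icc.mp hx).2
  · exact Finset.le_sup (f := id) (mem_Icc.mpr ⟨this, le_rfl⟩)

theorem a_le_lastIdx (hC : IntervalChain k k' a b) {j : ℕ} (hj : 1 ≤ j) (hjk : j ≤ k') :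
    a j ≤ LastIdx a b k' j := by
  rcases hjk.lt_or_eq with hlt | rfl
  · rw [hC.lastIdx_of_lt hj hlt]
    have := hC.a_lt j (j + 1) hj (by omega) hlt
    omega
  · rw [hC.lastIdx_last, ← hC.b_last]
    exact hC.a_le_b _ hj le_rfl

theorem lastIdx_lt (hC : IntervalChain k k' a b) {i j : ℕ} (hi : 1 ≤ i) (hij : i < j)
    (hjk : j ≤ k') : LastIdx a b k' i < LastIdx a b k' j := by
  rw [hC.lastIdx_of_lt hi (by omega)]
  have := hC.a_le_lastIdx (by omega) hjk
  have := hC.a_le_a (r := i + 1) (by omega) hij hjk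
  have := hC.le_a (r := i + 1) (by omega) (by omega)
  omega

theorem reaches_iff (hC : IntervalChain k k' a b) (i j : ℕ) :
    Reaches a b k' i j ↔ i < j ∧ j ≤ k' ∧ LastIdx a b k' j ≤ endIdx b i + 1 := by
  unfold Reaches
  refine and_congr_right fun hij => and_congr_right fun hjk => ?_
  have hL := hC.a_le_lastIdx (by omega) hjk
  rcases Nat.eq_zero_or_pos i with rfl | hi
  · have := hC.le_a (r := j) (by omega) hjk
    rw [endIdx_zero]
    omega
  · have := hC.a_lt i j hi hij hjk
    have := hC.le_a (r := i) hi (by omega)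
    rw [endIdx_of_ne_zero b hi.ne']
    omega

theorem lastWindow_spec (hC : IntervalChain k k' a b) (c : ℕ) :
    1 ≤ lastWindow a k' c ∧ lastWindow a k' c ≤ k' ∧ a (lastWindow a k' c) ≤ c + 1 := by
  have h1 : a 1 ≤ c + 1 := by rw [hC.a_one]; omega
  exact ⟨Nat.le_findGreatest (P := fun r => a r ≤ c + 1) hC.one_le h1, Nat.findGreatest_le _,
    Nat.findGreatest_spec (P := fun r => a r ≤ c + 1) hC.one_le h1⟩

theorem le_lastWindow {r c : ℕ} (hrk : r ≤ k') (h : a r ≤ c + 1) : r ≤ lastWindow a k' c :=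
  Nat.le_findGreatest (P := fun r => a r ≤ c + 1) hrk h

theorem lt_a_of_lastWindow_lt {r c : ℕ} (h : lastWindow a k' c < r) (hrk : r ≤ k') :
    c + 1 < a r :=
  lt_of_not_ge (Nat.findGreatest_is_greatest (P := fun r => a r ≤ c + 1) h hrk)

theorem lastWindow_mono {c c' : ℕ} (h : c ≤ c') : lastWindow a k' c ≤ lastWindow a k' c' :=
  Nat.findGreatest_mono_left (fun _ hr => by omega) k'

theorem lt_b_lastWindow (hC : IntervalChain k k' a b) {c : ℕ} (hc : c < k) :
    c < b (lastWindow a k' c) := by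
  obtain ⟨h1, h2, -⟩ := hC.lastWindow_spec c
  rcases h2.lt_or_eq with hlt | heq
  · have := lt_a_of_lastWindow_lt (lt_add_one _) (Nat.succ_le_of_lt hlt)
    have := hC.a_succ_le _ h1 hlt
    omega
  · rw [heq, hC.b_last]
    exact hc

theorem le_b_lastWindow_iff (hC : IntervalChain k k' a b) (c c' : ℕ) :
    c' ≤ b (lastWindow a k' c) ↔ ∃ r, 1 ≤ r ∧ r ≤ k' ∧ a r ≤ c + 1 ∧ c' ≤ b r := by
  obtain ⟨h1, h2, h3⟩ := hC.lastWindow_spec c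
  refine ⟨fun h => ⟨_, h1, h2, h3, h⟩, fun ⟨r, hr1, hrk, har, hbr⟩ => ?_⟩
  rcases (le_lastWindow hrk har).lt_or_eq with hlt | heq
  · exact hbr.trans (hC.b_lt r _ hr1 hlt h2).le
  · rwa [← heq]

theorem lastIdx_le_iff (hC : IntervalChain k k' a b) {r c : ℕ} (hc : c < k) (hr : 1 ≤ r)
    (hrk : r ≤ k') : LastIdx a b k' r ≤ c ↔ r < lastWindow a k' c := by
  obtain ⟨-, h2, h3⟩ := hC.lastWindow_spec c
  rcases hrk.lt_or_eq with hlt | rfl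
  · rw [hC.lastIdx_of_lt hr hlt]
    have := hC.le_a (r := r + 1) (by omega) hlt
    constructor
    · intro h
      exact le_lastWindow (r := r + 1) hlt (by omega)
    · intro h
      have := hC.a_le_a (r := r + 1) (s := lastWindow a k' c) (by omega) h h2
      omega
  · rw [hC.lastIdx_last]
    omega

end IntervalChain

def chase (φ : ℕ → ℕ) : ℕ → ℕ
  | 0 => 0
  | 1 => 1
  | j + 2 => φ (chase φ j)

section Chase

variable {φ : ℕ → ℕ}

@[simp] theorem chase_zero : chase φ 0 = 0 := rfl

@[simp] theorem chase_one : chase φ 1 = 1 := rfl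

theorem chase_add_two (j : ℕ) : chase φ (j + 2) = φ (chase φ j) := rfl

theorem chase_monotone (hφ : Monotone φ) (h0 : 1 ≤ φ 0) : Monotone (chase φ) := by
  have key : ∀ j, chase φ j ≤ chase φ (j + 1) ∧ chase φ (j + 1) ≤ chase φ (j + 2) := by
    intro j
    induction j with
    | zero => exact ⟨zero_le_one, h0⟩
    | succ j ih => exact ⟨ih.2, hφ ih.1⟩
  exact monotone_nat_of_le_succ fun j => (key j).1

theorem chase_add_two_mul_eq {i : ℕ} (h : chase φ i = chase φ (i + 1)) (d : ℕ) :
    chase φ (i + 2 * d) = chase φ (i + 2 * d + 1) := by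
  induction d with
  | zero => exact h
  | succ d ih =>
    rw [show i + 2 * (d + 1) = i + 2 * d + 2 by ring, chase_add_two, ih, ← chase_add_two (φ := φ)]

theorem chase_lt_succ (hmono : Monotone (chase φ)) {s : ℕ}
    (hs : chase φ s < chase φ (s + 1)) (hs' : ∀ i < s, chase φ i < chase φ s) {i : ℕ}
    (hi : i ≤ s) : chase φ i < chase φ (i + 1) := by
  refine (hmono (Nat.le_succ i)).lt_of_ne fun heq => ?_
  have := chase_add_two_mul_eq heq ((s - i) / 2)
  rcases Nat.even_or_odd (s - i) with ⟨d, hd⟩ | ⟨d, hd⟩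
  · rw [show i + 2 * ((s - i) / 2) = s by omega] at this
    exact hs.ne this
  · rw [show i + 2 * ((s - i) / 2) = s - 1 by omega, show s - 1 + 1 = s by omega] at this
    exact (hs' (s - 1) (by omega)).ne this

theorem exists_le_chase {k : ℕ} (hφ : ∀ c < k, c + 2 ≤ φ c)
    (hmono : Monotone (chase φ)) : ∃ j, k ≤ chase φ j := by
  have key : ∀ j, min j k ≤ chase φ j ∧ min (j + 1) k ≤ chase φ (j + 1) := by
    intro j
    induction j with
    | zero => simp
    | succ j ih =>
      refine ⟨ih.2, ?_⟩
      rw [chase_add_two]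
      by_cases hj : chase φ j < k
      · have := hφ _ hj
        omega
      · have := hmono (show j ≤ j + 2 by omega)
        rw [chase_add_two] at this
        omega
  exact ⟨k, by simpa using (key k).1⟩

end Chase

section SignedSum

variable {φ : ℕ → ℕ} {F : ℕ → ℤ} {k : ℕ}

theorem sum_Ico_eq_sum_Ico_of_lt (hrec : ∀ c < k, F c = -∑ x ∈ Ioo c (φ c), F x)
    (hφ : ∀ c < k, c < φ c ∧ φ c ≤ k + 1) {c : ℕ} (hc : c < k) :
    ∑ x ∈ Ico c (k + 1), F x = ∑ x ∈ Ico (φ c) (k + 1), F x := by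
  obtain ⟨h1, h2⟩ := hφ c hc
  rw [← sum_Ico_consecutive _ h1.le h2, Ico_eq_cons_Ioo h1, sum_cons, hrec c hc]
  ring

theorem eq_neg_one_pow_mul_of_chase_lt (hrec : ∀ c < k, F c = -∑ x ∈ Ioo c (φ c), F x)
    (hφ : ∀ c < k, c < φ c ∧ φ c ≤ k + 1) (j : ℕ) (hj : ∀ i < j, chase φ i < k) :
    F 0 = (-1) ^ j * (∑ x ∈ Ico (chase φ j) (k + 1), F x -
      ∑ x ∈ Ico (chase φ (j + 1)) (k + 1), F x) := by
  induction j with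
  | zero =>
    rw [pow_zero, one_mul, chase_zero, chase_one, sum_eq_sum_Ico_succ_bot (by omega)]
    ring
  | succ j ih =>
    rw [ih fun i hi => hj i (by omega), sum_Ico_eq_sum_Ico_of_lt hrec hφ (hj j (by omega)),
      ← chase_add_two (φ := φ), pow_succ]
    ring

theorem eq_neg_one_pow_of_chase (hk : F k = 1)
    (hrec : ∀ c < k, F c = -∑ x ∈ Ioo c (φ c), F x)
    (hφ : ∀ c < k, c < φ c ∧ φ c ≤ k + 1) {s : ℕ} (hs : ∀ i < s, chase φ i < k)
    (h1 : chase φ s = k) (h2 : chase φ (s + 1) = k + 1) : F 0 = (-1) ^ s := by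
  rw [eq_neg_one_pow_mul_of_chase_lt hrec hφ s hs, h1, h2, Ico_self, sum_empty,
    Nat.Ico_succ_singleton, sum_singleton, hk]
  ring

theorem eq_zero_of_chase (hrec : ∀ c < k, F c = -∑ x ∈ Ioo c (φ c), F x)
    (hφ : ∀ c < k, c < φ c ∧ φ c ≤ k + 1) {s : ℕ} (hs : ∀ i < s, chase φ i < k)
    (h : chase φ s = chase φ (s + 1)) : F 0 = 0 := by
  rw [eq_neg_one_pow_mul_of_chase_lt hrec hφ s hs, h, sub_self, mul_zero]

end SignedSum

/-- For `c < k`, `(v (c + 1), …, v j)` is an `S`-cadet sequence iff `c < j < nextCut a b k' c`. -/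
def nextCut (a b : ℕ → ℕ) (k' c : ℕ) : ℕ := b (lastWindow a k' c) + 1

/-- The run of the algorithm read off the chase. -/
def chaseIdx (a b : ℕ → ℕ) (k' : ℕ) : ℕ → ℕ
  | 0 => 0
  | j + 1 => lastWindow a k' (chase (nextCut a b k') j)

namespace IntervalChain

variable {k k' : ℕ} {a b : ℕ → ℕ}

theorem nextCut_eq_endIdx (hC : IntervalChain k k' a b) (c : ℕ) :
    nextCut a b k' c = endIdx b (lastWindow a k' c) + 1 := by
  rw [nextCut, endIdx_of_ne_zero b (by have := (hC.lastWindow_spec c).1; omega)]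

theorem nextCut_monotone (hC : IntervalChain k k' a b) : Monotone (nextCut a b k') := by
  intro c c' h
  simp only [hC.nextCut_eq_endIdx]
  have := hC.endIdx_mono (lastWindow_mono (a := a) (k' := k') h) (hC.lastWindow_spec c').2.1
  omega

theorem nextCut_le (hC : IntervalChain k k' a b) (c : ℕ) : nextCut a b k' c ≤ k + 1 := by
  obtain ⟨h1, h2, -⟩ := hC.lastWindow_spec c
  have := hC.b_le h1 h2
  rw [nextCut]
  omega

theorem lt_nextCut (hC : IntervalChain k k' a b) {c : ℕ} (hc : c < k) :
    c + 1 < nextCut a b k' c := by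
  have := hC.lt_b_lastWindow hc
  rw [nextCut]
  omega

theorem lastWindow_eq (hC : IntervalChain k k' a b) {c r : ℕ} (hc : c < k) (hr : 1 ≤ r)
    (hrk : r ≤ k') (hlast : ¬ LastIdx a b k' r ≤ c)
    (hprev : r = 1 ∨ LastIdx a b k' (r - 1) ≤ c) : lastWindow a k' c = r := by
  rw [hC.lastIdx_le_iff hc hr hrk] at hlast
  have h1 := (hC.lastWindow_spec c).1
  rcases hprev with rfl | hprev
  · omega
  · rcases Nat.lt_or_ge r 2 with hr2 | hr2
    · omega
    · rw [hC.lastIdx_le_iff hc (by omega) (by omega)] at hprev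
      omega

section AlgRun

variable {t : ℕ} {idx : ℕ → ℕ}

theorem idx_lt_of_algRun (hC : IntervalChain k k' a b) (hrun : AlgRun a b k' t idx) {i j : ℕ}
    (hij : i < j) (hjt : j ≤ t) : idx i < idx j := by
  induction j, hij using Nat.le_induction with
  | base => exact ((hC.reaches_iff _ _).mp (hrun.2.2.2 i hjt).1).1
  | succ j hij ih =>
    exact (ih (by omega)).trans ((hC.reaches_iff _ _).mp (hrun.2.2.2 j hjt).1).1

theorem idx_le_of_algRun (hC : IntervalChain k k' a b) (hrun : AlgRun a b k' t idx) {j : ℕ}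
    (hjt : j ≤ t) : idx j ≤ k' := by
  rcases hjt.lt_or_eq with h | rfl
  · exact (hC.idx_lt_of_algRun hrun h le_rfl).le.trans hrun.2.1.le
  · exact hrun.2.1.le

theorem lastWindow_zero_of_algRun (hC : IntervalChain k k' a b) (hrun : AlgRun a b k' t idx)
    (ht : 0 < t) : lastWindow a k' 0 = idx 1 := by
  have h01 := hC.idx_lt_of_algRun hrun zero_lt_one ht
  have h1k := hC.idx_le_of_algRun hrun ht
  rw [hrun.1] at h01
  have hreach : LastIdx a b k' (idx 1) ≤ 1 := by
    simpa [hrun.1] using ((hC.reaches_iff _ _).mp (hrun.2.2.2 0 ht).1).2.2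
  have hL := hC.a_le_lastIdx h01 h1k
  have := hC.le_a h01 h1k
  refine hC.lastWindow_eq hC.one_le_k h01 h1k (by omega) (Or.inl ?_)
  by_contra hne
  have := hC.lastIdx_lt le_rfl (show 1 < idx 1 by omega) h1k
  have := hC.a_le_lastIdx le_rfl hC.one_le
  rw [hC.a_one] at this
  omega

theorem lastWindow_endIdx_of_algRun (hC : IntervalChain k k' a b) (hrun : AlgRun a b k' t idx)
    {j : ℕ} (hj : j + 1 < t) : lastWindow a k' (endIdx b (idx j) + 1) = idx (j + 2) := by
  have h01 : idx j < idx (j + 1) := hC.idx_lt_of_algRun hrun (by omega) (by omega)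
  have h12 : idx (j + 1) < idx (j + 2) := hC.idx_lt_of_algRun hrun (by omega) (by omega)
  have hk : idx (j + 2) ≤ k' := hC.idx_le_of_algRun hrun (by omega)
  obtain ⟨hR12, hnot, hmin⟩ := hrun.2.2.2 (j + 1) hj
  have hR12' : LastIdx a b k' (idx (j + 2)) ≤ endIdx b (idx (j + 1)) + 1 :=
    ((hC.reaches_iff _ _).mp hR12).2.2
  have e1 := hC.endIdx_lt h01 (h12.le.trans hk)
  have e2 := hC.endIdx_lt h12 hk
  have e3 := hC.endIdx_mono hk le_rfl
  rw [hC.endIdx_last] at e3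
  refine hC.lastWindow_eq (by omega) (by omega) hk ?_ (Or.inr ?_)
  · exact fun h => hnot j (lt_add_one j) ((hC.reaches_iff _ _).mpr ⟨h01.trans h12, hk, h⟩)
  · rcases (show idx (j + 1) ≤ idx (j + 2) - 1 by omega).lt_or_eq with hgt | heq
    · have hL := hC.lastIdx_lt (show 1 ≤ idx (j + 2) - 1 by omega)
        (show idx (j + 2) - 1 < idx (j + 2) by omega) hk
      have hR : Reaches a b k' (idx (j + 1)) (idx (j + 2) - 1) :=
        (hC.reaches_iff _ _).mpr ⟨hgt, by omega, by omega⟩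
      obtain ⟨l, hl, hRl⟩ := hmin _ (show idx (j + 2) - 1 < idx (j + 2) by omega) hR
      have := ((hC.reaches_iff _ _).mp hRl).2.2
      have := hC.endIdx_mono (show idx l ≤ idx j by
        rcases (show l ≤ j by omega).lt_or_eq with h | rfl
        exacts [(hC.idx_lt_of_algRun hrun h (by omega)).le, le_rfl]) (by omega)
      omega
    · rw [← heq]
      exact ((hC.reaches_iff _ _).mp (hrun.2.2.2 j (by omega)).1).2.2

theorem chase_eq_of_algRun (hC : IntervalChain k k' a b) (hrun : AlgRun a b k' t idx) :
    ∀ j ≤ t, chase (nextCut a b k') (j + 1) = endIdx b (idx j) + 1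
  | 0, _ => by rw [hrun.1, chase_one, endIdx_zero]
  | 1, h => by
    rw [chase_add_two, chase_zero, hC.nextCut_eq_endIdx, hC.lastWindow_zero_of_algRun hrun h]
  | j + 2, h => by
    rw [chase_add_two, hC.chase_eq_of_algRun hrun j (by omega), hC.nextCut_eq_endIdx,
      hC.lastWindow_endIdx_of_algRun hrun (by omega)]

theorem chase_of_algRun (hC : IntervalChain k k' a b) (hrun : AlgRun a b k' t idx) :
    (∀ j < t, chase (nextCut a b k') j < k) ∧ chase (nextCut a b k') t = k ∧
      chase (nextCut a b k') (t + 1) = k + 1 := by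
  have hchase := hC.chase_eq_of_algRun hrun
  have ht : 0 < t := Nat.pos_of_ne_zero fun h => by
    have := hC.one_le
    have := hrun.2.1
    rw [h, hrun.1] at this
    omega
  have hlast : endIdx b (idx (t - 1)) + 1 = k := by
    have hR := ((hC.reaches_iff _ _).mp (hrun.2.2.2 (t - 1) (by omega)).1).2.2
    have hlt := hC.endIdx_lt (hC.idx_lt_of_algRun hrun (show t - 1 < t by omega) le_rfl)
      (hC.idx_le_of_algRun hrun le_rfl)
    rw [show t - 1 + 1 = t by omega, hrun.2.1, hC.lastIdx_last] at hR
    rw [hrun.2.1, hC.endIdx_last] at hlt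
    omega
  refine ⟨fun j hj => ?_, ?_, ?_⟩
  · rcases Nat.eq_zero_or_pos j with rfl | hj0
    · exact hC.one_le_k
    · have := hC.endIdx_lt (hC.idx_lt_of_algRun hrun (show j - 1 < t - 1 by omega) (by omega))
        (hC.idx_le_of_algRun hrun (show t - 1 ≤ t by omega))
      rw [show j = j - 1 + 1 by omega, hchase _ (by omega)]
      omega
  · rw [show t = t - 1 + 1 by omega, hchase _ (by omega), hlast]
  · rw [hchase t le_rfl, hrun.2.1, hC.endIdx_last]

theorem monotone_chase_nextCut (hC : IntervalChain k k' a b) :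
    Monotone (chase (nextCut a b k')) :=
  chase_monotone hC.nextCut_monotone (by have := hC.lt_nextCut hC.one_le_k; omega)

theorem chase_succ_eq_endIdx (hC : IntervalChain k k' a b) :
    ∀ j, chase (nextCut a b k') (j + 1) = endIdx b (chaseIdx a b k' j) + 1
  | 0 => rfl
  | _ + 1 => hC.nextCut_eq_endIdx _

theorem chaseIdx_le (hC : IntervalChain k k' a b) : ∀ j, chaseIdx a b k' j ≤ k'
  | 0 => Nat.zero_le _
  | _ + 1 => (hC.lastWindow_spec _).2.1

theorem chaseIdx_monotone (hC : IntervalChain k k' a b) : Monotone (chaseIdx a b k') := by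
  refine monotone_nat_of_le_succ fun j => ?_
  cases j with
  | zero => exact Nat.zero_le _
  | succ j => exact lastWindow_mono (hC.monotone_chase_nextCut (Nat.le_succ j))

theorem chaseIdx_lt_of_chase_lt (hC : IntervalChain k k' a b) {j : ℕ}
    (h : chase (nextCut a b k') (j + 1) < chase (nextCut a b k') (j + 2)) :
    chaseIdx a b k' j < chaseIdx a b k' (j + 1) := by
  rw [hC.chase_succ_eq_endIdx, hC.chase_succ_eq_endIdx] at h
  exact hC.lt_of_endIdx_lt (hC.chaseIdx_le j) (by omega)

theorem not_reaches_chaseIdx (hC : IntervalChain k k' a b) {j l : ℕ}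
    (hj : chase (nextCut a b k') j < k) (hl : l < j) :
    ¬ Reaches a b k' (chaseIdx a b k' l) (chaseIdx a b k' (j + 1)) := by
  intro hR
  have hL := ((hC.reaches_iff _ _).mp hR).2.2
  rw [← hC.chase_succ_eq_endIdx] at hL
  have := hC.monotone_chase_nextCut (show l + 1 ≤ j by omega)
  have := (hC.lastIdx_le_iff (r := chaseIdx a b k' (j + 1)) hj (hC.lastWindow_spec _).1
    (hC.chaseIdx_le (j + 1))).mp (by omega)
  exact lt_irrefl _ this

theorem exists_reaches_chaseIdx (hC : IntervalChain k k' a b) {j r : ℕ}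
    (hj : chase (nextCut a b k') j < k) (hr : r < chaseIdx a b k' (j + 1))
    (hR : Reaches a b k' (chaseIdx a b k' j) r) :
    ∃ l < j, Reaches a b k' (chaseIdx a b k' l) r := by
  obtain ⟨hjr, hrk, -⟩ := (hC.reaches_iff _ _).mp hR
  have hL := (hC.lastIdx_le_iff hj (by omega) hrk).mpr hr
  rcases Nat.eq_zero_or_pos j with rfl | hj0
  · have := hC.a_le_lastIdx (by omega) hrk
    have := hC.le_a (r := r) (by omega) hrk
    simp only [chase_zero] at hL
    omega
  · refine ⟨j - 1, by omega, (hC.reaches_iff _ _).mpr ⟨?_, hrk, ?_⟩⟩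
    · exact (hC.chaseIdx_monotone (Nat.sub_le j 1)).trans_lt hjr
    · rwa [← hC.chase_succ_eq_endIdx, Nat.sub_add_cancel hj0]

theorem algRun_chaseIdx (hC : IntervalChain k k' a b) {s : ℕ}
    (hs : ∀ j < s, chase (nextCut a b k') j < k) (h1 : chase (nextCut a b k') s = k)
    (h2 : chase (nextCut a b k') (s + 1) = k + 1) : AlgRun a b k' s (chaseIdx a b k') := by
  have hmono := hC.monotone_chase_nextCut
  have hstrict : ∀ i ≤ s, chase (nextCut a b k') i < chase (nextCut a b k') (i + 1) :=
    fun i hi => chase_lt_succ hmono (by omega) (fun j hj => by have := hs j hj; omega) hi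
  have hidx : ∀ j < s, chaseIdx a b k' j < chaseIdx a b k' (j + 1) := fun j hj =>
    hC.chaseIdx_lt_of_chase_lt (hstrict (j + 1) hj)
  have hy := hC.chase_succ_eq_endIdx
  have hlast : chaseIdx a b k' s = k' := by
    by_contra hne
    have := hC.endIdx_lt (lt_of_le_of_ne (hC.chaseIdx_le s) hne) le_rfl
    have := hy s
    rw [hC.endIdx_last] at *
    omega
  refine ⟨rfl, hlast, fun j hj heq => ?_, fun j hj => ⟨?_, fun l hl => hC.not_reaches_chaseIdx
    (hs j hj) hl, fun r hr => hC.exists_reaches_chaseIdx (hs j hj) hr⟩⟩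
  · have := hy j
    have := hmono (show j + 1 ≤ s by omega)
    rw [heq, hC.endIdx_last] at *
    omega
  · refine (hC.reaches_iff _ _).mpr ⟨hidx j hj, hC.chaseIdx_le (j + 1), ?_⟩
    rw [← hy]
    rcases (show j + 1 ≤ s by omega).lt_or_eq with hlt | heq
    · rw [hC.lastIdx_le_iff (hs _ hlt) (by have := hidx j hj; omega) (hC.chaseIdx_le (j + 1))]
      exact hidx (j + 1) hlt
    · rw [heq, hlast, hC.lastIdx_last, h1]

theorem exists_algRun_iff (hC : IntervalChain k k' a b) (t : ℕ) :
    (∃ idx, AlgRun a b k' t idx) ↔ (∀ j < t, chase (nextCut a b k') j < k) ∧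
      chase (nextCut a b k') t = k ∧ chase (nextCut a b k') (t + 1) = k + 1 :=
  ⟨fun ⟨_, hrun⟩ => hC.chase_of_algRun hrun, fun ⟨hs, h1, h2⟩ => ⟨_, hC.algRun_chaseIdx hs h1 h2⟩⟩

end AlgRun

end IntervalChain

namespace IntervalChain

variable {k k' : ℕ} {a b : ℕ → ℕ}

theorem le_of_algRun (hC : IntervalChain k k' a b) {t : ℕ} {idx : ℕ → ℕ}
    (hrun : AlgRun a b k' t idx) : t ≤ k := by
  have : ∀ j ≤ t, j ≤ idx j := by
    intro j hj
    induction j with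
    | zero => exact Nat.zero_le _
    | succ j ih =>
      have := hC.idx_lt_of_algRun hrun (show j < j + 1 by omega) hj
      have := ih (by omega)
      omega
  have := this t le_rfl
  rw [hrun.2.1] at this
  exact this.trans hC.le_k

variable {F : ℕ → ℤ}

theorem eq_neg_one_pow_of_algRun (hC : IntervalChain k k' a b) (hF : F k = 1)
    (hrec : ∀ c < k, F c = -∑ x ∈ Ioo c (nextCut a b k' c), F x) {t : ℕ}
    {idx : ℕ → ℕ} (hrun : AlgRun a b k' t idx) : F 0 = (-1) ^ t := by
  obtain ⟨hs, h1, h2⟩ := (hC.exists_algRun_iff t).mp ⟨idx, hrun⟩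
  exact eq_neg_one_pow_of_chase hF hrec
    (fun c hc => ⟨by have := hC.lt_nextCut hc; omega, hC.nextCut_le c⟩) hs h1 h2

theorem eq_zero_of_not_exists_algRun (hC : IntervalChain k k' a b)
    (hrec : ∀ c < k, F c = -∑ x ∈ Ioo c (nextCut a b k' c), F x)
    (hno : ¬ ∃ t idx, AlgRun a b k' t idx) : F 0 = 0 := by
  have hmono := hC.monotone_chase_nextCut
  have hex := exists_le_chase (fun c hc => hC.lt_nextCut hc) hmono
  have hs : ∀ i < Nat.find hex, chase (nextCut a b k') i < k := fun i hi =>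
    lt_of_not_ge (Nat.find_min hex hi)
  have hle : ∀ j, chase (nextCut a b k') j ≤ k + 1
    | 0 => Nat.zero_le _
    | 1 => by simp
    | j + 2 => hC.nextCut_le _
  refine eq_zero_of_chase hrec
    (fun c hc => ⟨by have := hC.lt_nextCut hc; omega, hC.nextCut_le c⟩) hs ?_
  have : k ≤ chase (nextCut a b k') (Nat.find hex) := Nat.find_spec hex
  have := hmono (show Nat.find hex ≤ Nat.find hex + 1 by omega)
  have := hle (Nat.find hex + 1)
  by_contra hne
  exact hno ⟨_, (hC.exists_algRun_iff _).mpr ⟨hs, by omega, by omega⟩⟩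

end IntervalChain

section MaximalWindows

variable {n m : ℕ} {S : Fin n → Fin n → Finset ℤ} {T : PlaneTree n m} {k k' : ℕ}
  {v : ℕ → Fin n} {a b : ℕ → ℕ}

theorem isSCadetWindow_iff_exists_window (hcad : IsCadetWindow T v 1 k)
    (hinj : WindowInj v 1 k) (E : MaxCadetExtension T k v)
    (hsep : ∀ Y, IsMaxSCadetSet S T Y →
      (Icc 1 k).image v ∩ Y = ∅ ∨ Y ⊆ (Icc 1 k).image v)
    (hboxes : ∀ r, 1 ≤ r → r ≤ k' → 1 ≤ a r ∧ a r ≤ b r ∧ b r ≤ k ∧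
      IsMaxSCadetSet S T ((Icc (a r) (b r)).image v))
    (hall : ∀ Z, IsMaxSCadetSet S T Z → Z ⊆ (Icc 1 k).image v →
      ∃ r, 1 ≤ r ∧ r ≤ k' ∧ Z = (Icc (a r) (b r)).image v)
    {i j : ℕ} (hi : 1 ≤ i) (hij : i ≤ j) (hjk : j ≤ k) :
    IsSCadetWindow S T v i j ↔ ∃ r, 1 ≤ r ∧ r ≤ k' ∧ a r ≤ i ∧ j ≤ b r := by
  constructor
  · intro h
    obtain ⟨A, B, hA, hB, hmax⟩ := ((E.isSCadetWindow_iff hi hjk).mp h).exists_isMaxSCadetWindow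
      (le_trans (by omega) E.add_shift_le)
    have hmem : ∀ p, i ≤ p → p ≤ j → v p ∈ (Icc A B).image E.seq := fun p hip hpj =>
      E.seq_add_shift p (by omega) (by omega) ▸
        mem_image_of_mem _ (mem_Icc.mpr ⟨by omega, by omega⟩)
    have hZ : IsMaxSCadetSet S T ((Icc A B).image E.seq) :=
      ⟨_, _, A, B, E.isMax, E.inj, hmax, rfl⟩
    have hsub := (hsep _ hZ).resolve_left fun h0 => notMem_empty (v i) (h0 ▸
      mem_inter.mpr ⟨mem_image_of_mem v (mem_Icc.mpr ⟨hi, by omega⟩),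
        hmem i le_rfl hij⟩)
    obtain ⟨r, hr, hrk, hZr⟩ := hall _ hZ hsub
    obtain ⟨har, -, hbr, -⟩ := hboxes r hr hrk
    have hi' := (hinj.mem_image_Icc_iff har hbr hi (by omega)).mp (hZr ▸ hmem i le_rfl hij)
    have hj' := (hinj.mem_image_Icc_iff har hbr (by omega) hjk).mp (hZr ▸ hmem j hij le_rfl)
    exact ⟨r, hr, hrk, hi'.1, hj'.2⟩
  · rintro ⟨r, hr, hrk, hai, hjb⟩
    obtain ⟨ha, hab, hbk, hZ⟩ := hboxes r hr hrk
    exact (isSCadetWindow_of_isMaxSCadetSet hcad ha hab hbk hZ).1.mono hai hij hjb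

theorem intervalChain_of_isSCadetWindow_iff (hcad : IsCadetWindow T v 1 k) (hk' : 1 ≤ k')
    (hboxes : ∀ r, 1 ≤ r → r ≤ k' → 1 ≤ a r ∧ a r ≤ b r ∧ b r ≤ k ∧
      IsMaxSCadetSet S T ((Icc (a r) (b r)).image v))
    (hmono : ∀ r s, 1 ≤ r → r < s → s ≤ k' → b r < b s)
    (hwindow : ∀ i j, 1 ≤ i → i ≤ j → j ≤ k →
      (IsSCadetWindow S T v i j ↔ ∃ r, 1 ≤ r ∧ r ≤ k' ∧ a r ≤ i ∧ j ≤ b r)) :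
    IntervalChain k k' a b := by
  refine .of_cover hk' (fun r hr hrk => (hboxes r hr hrk).imp_right (·.imp_right (·.1))) hmono
    (fun p hp hpk => (hwindow p p hp le_rfl hpk).mp (isSCadetWindow_self hp))
    fun r s hr hrk hs hsk has => ?_
  obtain ⟨ha, hab, hbk, hZ⟩ := hboxes r hr hrk
  obtain ⟨-, -, hbsk, -⟩ := hboxes s hs hsk
  by_contra! hbrs
  exact (isSCadetWindow_of_isMaxSCadetSet hcad ha hab hbk hZ).2 (by omega)
    ((hwindow _ _ ha (by omega) (by omega)).mpr ⟨s, hs, hsk, has, hbrs⟩)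

theorem neg_one_pow_mul_contrib_eq (E : MaxCadetExtension T k v) (hinj : WindowInj v 1 k)
    (hC : IntervalChain k k' a b)
    (hwindow : ∀ i j, 1 ≤ i → i ≤ j → j ≤ k →
      (IsSCadetWindow S T v i j ↔ ∃ r, 1 ≤ r ∧ r ≤ k' ∧ a r ≤ i ∧ j ≤ b r))
    {c : ℕ} (hc : c < k) :
    (-1) ^ (k - c) * contrib S T ((Icc (c + 1) k).image v) =
      -∑ j ∈ Ioo c (nextCut a b k' c),
        (-1) ^ (k - j) * contrib S T ((Icc (j + 1) k).image v) := by
  have hfilter : (Ioc c k).filter (IsSCadetWindow S T v (c + 1)) =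
      Ioo c (nextCut a b k' c) := by
    ext j
    simp only [mem_filter, mem_Ioc, mem_Ioo]
    have := hC.nextCut_le c
    constructor
    · rintro ⟨⟨hcj, hjk⟩, h⟩
      have := (hC.le_b_lastWindow_iff c j).mpr ((hwindow _ _ (by omega) hcj hjk).mp h)
      exact ⟨hcj, by rw [nextCut]; omega⟩
    · rintro ⟨hcj, hjn⟩
      refine ⟨⟨hcj, by omega⟩, (hwindow _ _ (by omega) hcj (by omega)).mpr
        ((hC.le_b_lastWindow_iff c j).mp (by rw [nextCut] at hjn; omega))⟩
  rw [contrib_image_Icc_eq_sum E hinj hc, hfilter, mul_sum, ← sum_neg_distrib]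
  refine sum_congr rfl fun j hj => ?_
  obtain ⟨hcj, hjn⟩ := mem_Ioo.mp hj
  have := hC.nextCut_le c
  have hsq : ((-1 : ℤ) ^ (j - c - 1)) * (-1) ^ (j - c - 1) = 1 := by
    rw [← pow_add, ← two_mul, pow_mul]
    norm_num
  rw [show k - c = (k - j) + (j - c - 1) + 1 by omega, pow_add, pow_add]
  linear_combination (-(-1 : ℤ) ^ (k - j) * contrib S T ((Icc (j + 1) k).image v)) * hsq

end MaximalWindows

/-- Theorem 3.13: for an `S`-connected cadet sequence `(v 1, …, v k)`
with maximal `S`-cadet sequences the windows `[a r, b r]` (`1 ≤ r ≤ k'`, in increasing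
order of last index), if the algorithm succeeds with `t` steps then the contribution is
`(-1)^(k - t)`, and if it fails then the contribution is `0`. -/
theorem statement_3 {n : ℕ} (S : Fin n → Fin n → Finset ℤ) (T : PlaneTree n (mOf S))
    (k : ℕ) (v : ℕ → Fin n)
    (hcad : IsCadetWindow T v 1 k) (hinj : WindowInj v 1 k)
    (hconn : SConnected S T ((Finset.Icc 1 k).image v))
    (k' : ℕ) (hk' : 1 ≤ k') (a b : ℕ → ℕ)
    (hboxes : ∀ r, 1 ≤ r → r ≤ k' → 1 ≤ a r ∧ a r ≤ b r ∧ b r ≤ k ∧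
      IsMaxSCadetSet S T ((Finset.Icc (a r) (b r)).image v))
    (hmono : ∀ r s, 1 ≤ r → r < s → s ≤ k' → b r < b s)
    (hall : ∀ Z, IsMaxSCadetSet S T Z → Z ⊆ (Finset.Icc 1 k).image v →
      ∃ r, 1 ≤ r ∧ r ≤ k' ∧ Z = (Finset.Icc (a r) (b r)).image v) :
    (∀ t idx, AlgRun a b k' t idx →
      contrib S T ((Finset.Icc 1 k).image v) = (-1) ^ (k - t)) ∧
    ((¬ ∃ t idx, AlgRun a b k' t idx) → contrib S T ((Finset.Icc 1 k).image v) = 0) := by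
  obtain ⟨ha, hab, hbk, hZ⟩ := hboxes 1 le_rfl hk'
  obtain ⟨E, -⟩ := exists_maxCadetExtension hcad ha hab hbk hZ
  have hwindow := fun (i j : ℕ) hi hij hjk =>
    isSCadetWindow_iff_exists_window (i := i) (j := j) hcad hinj E hconn.2.1 hboxes hall hi hij hjk
  have hC := intervalChain_of_isSCadetWindow_iff hcad hk' hboxes hmono hwindow
  set F : ℕ → ℤ := fun c => (-1) ^ (k - c) * contrib S T ((Icc (c + 1) k).image v)
  have hrec : ∀ c < k, F c = -∑ x ∈ Ioo c (nextCut a b k' c), F x := fun c hc =>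
    neg_one_pow_mul_contrib_eq E hinj hC hwindow hc
  have hF : contrib S T ((Icc 1 k).image v) = (-1) ^ k * F 0 := by
    simp only [F, Nat.sub_zero, zero_add]
    rw [← mul_assoc, ← pow_add, Even.neg_one_pow ⟨k, rfl⟩, one_mul]
  refine ⟨fun t idx hrun => ?_, fun hno => ?_⟩
  · have hFk : F k = 1 := by simp [F, contrib_empty]
    rw [hF, hC.eq_neg_one_pow_of_algRun hFk hrec hrun, ← pow_add,
      show k + t = (k - t) + 2 * t by have := hC.le_of_algRun hrun; omega, pow_add, pow_mul]
    norm_num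
  · rw [hF, hC.eq_zero_of_not_exists_algRun hrec hno, mul_zero]
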